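/- For every x ∈ X and every n ∈ ℤ, the local essential ranges satisfy E_{T^n x}(f) = f(n,x) · E_x(f) · f(n,x)^{-1}. -/

import Mathlib

open Topology Pointwise Set Filter

section Defs

variable {X : Type*} [TopologicalSpace X] {G : Type*} [TopologicalSpace G] [Group G]

/-- The positive-iterate part of the cocycle generated by `f` over `T`:
`f(n,x) = f(T^{n-1}x) ⋯ f(Tx) · f(x)` for `n ≥ 1` and `f(0,x) = e`. -/
def cocycleNat (T : X ≃ₜ X) (f : X → G) : ℕ → X → G
  | 0, _ => 1
  | n + 1, x => f ((T.toEquiv ^ n) x) * cocycleNat T f n x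

/-- The cocycle generated by `f` over `T`, at integer times:
`f(n,x)` as above for `n ≥ 0` and `f(n,x) = f(-n, T^n x)⁻¹` for `n < 0`. -/
def cocycle (T : X ≃ₜ X) (f : X → G) (n : ℤ) (x : X) : G :=
  if 0 ≤ n then cocycleNat T f n.toNat x
  else (cocycleNat T f (-n).toNat ((T.toEquiv ^ n) x))⁻¹

/-- The `n`-th power of the skew product `T_f` on `X × G`:
`T_f^n (x,g) = (T^n x, f(n,x)·g)`. -/
def skewPow (T : X ≃ₜ X) (f : X → G) (n : ℤ) (p : X × G) : X × G :=
  ((T.toEquiv ^ n) p.1, cocycle T f n p.1 * p.2)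

/-- The `n`-th power of the skew product `T_f` acting on `X × G/H`:
`T_f^n (x, gH) = (T^n x, f(n,x)·gH)`. -/
def skewPowQ (T : X ≃ₜ X) (f : X → G) (H : Subgroup G) (n : ℤ) (p : X × (G ⧸ H)) :
    X × (G ⧸ H) :=
  ((T.toEquiv ^ n) p.1, cocycle T f n p.1 • p.2)

/-- The local essential range `E_x(f)`: all `g ∈ G` such that for every open
neighbourhood `U` of `x` and every open neighbourhood `V` of the identity there are
`n ∈ ℤ` and `y ∈ U ∩ T⁻ⁿU` with `f(n,y) ∈ V·g`. -/
def essRange (T : X ≃ₜ X) (f : X → G) (x : X) : Set G :=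
  {g | ∀ U : Set X, IsOpen U → x ∈ U → ∀ V : Set G, IsOpen V → (1 : G) ∈ V →
    ∃ n : ℤ, ∃ y ∈ U, (T.toEquiv ^ n) y ∈ U ∧ ∃ v ∈ V, cocycle T f n y = v * g}

/-- `P_x(f)`: the vertical section at `x` of the closure of the `T_f`-orbit of `(x,e)`. -/
def Pset (T : X ≃ₜ X) (f : X → G) (x : X) : Set G :=
  {g | (x, g) ∈ closure (Set.range fun n : ℤ => skewPow T f n (x, 1))}

/-- `𝒟(f) = {x : E_x(f) = P_x(f)}`. -/
def Dset (T : X ≃ₜ X) (f : X → G) : Set X :=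
  {x | essRange T f x = Pset T f x}

/-- Topological recurrence of the cocycle generated by `f`: for every open
neighbourhood `V` of the identity of `G` and every nonempty open `U ⊆ X` there is
`n ≠ 0` with `T⁻ⁿU ∩ U ∩ {x : f(n,x) ∈ V} ≠ ∅`. -/
def IsRecurrentCocycle (T : X ≃ₜ X) (f : X → G) : Prop :=
  ∀ V : Set G, IsOpen V → (1 : G) ∈ V → ∀ U : Set X, IsOpen U → U.Nonempty →
    ∃ n : ℤ, n ≠ 0 ∧ ∃ x ∈ U, (T.toEquiv ^ n) x ∈ U ∧ cocycle T f n x ∈ V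

/-- Minimality of a homeomorphism: every orbit is dense. -/
def IsMinimal (T : X ≃ₜ X) : Prop :=
  ∀ x : X, Dense (Set.range fun n : ℤ => (T.toEquiv ^ n) x)

/-- A consistent selection of subgroups for the cocycle generated by `f`: a family of
closed subgroups `H x ⊆ E_x(f)` with `H (Tⁿx) = f(n,x)·(H x)·f(n,x)⁻¹` depending
continuously on `x` for the Fell topology. -/
structure IsConsistentSelection (T : X ≃ₜ X) (f : X → G) (H : X → Subgroup G) : Prop where
  isClosed : ∀ x : X, IsClosed (H x : Set G)
  subset_essRange : ∀ x : X, (H x : Set G) ⊆ essRange T f x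
  conj : ∀ (x : X) (n : ℤ), (H ((T.toEquiv ^ n) x) : Set G) =
    (fun h => cocycle T f n x * h * (cocycle T f n x)⁻¹) '' (H x : Set G)
  fell_compact : ∀ (x : X) (K : Set G), IsCompact K → K ∩ (H x : Set G) = ∅ →
    ∃ W ∈ 𝓝 x, ∀ y ∈ W, K ∩ (H y : Set G) = ∅
  fell_open : ∀ (x : X) (O : Set G), IsOpen O → (O ∩ (H x : Set G)).Nonempty →
    ∃ W ∈ 𝓝 x, ∀ y ∈ W, (O ∩ (H y : Set G)).Nonempty

/-- The `T_f`-orbit closure of a point of `X × G`. -/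
def orbitClosure (T : X ≃ₜ X) (f : X → G) (p : X × G) : Set (X × G) :=
  closure (Set.range fun n : ℤ => skewPow T f n p)

/-- For `C ⊆ X × G`, the set `H = {g : C·g⁻¹ = C}`, where `C·g = {(y, c·g) : (y,c) ∈ C}`. -/
def stabSet (C : Set (X × G)) : Set G :=
  {g : G | (fun p : X × G => (p.1, p.2 * g⁻¹)) '' C = C}

/-- A strongly regular orbit closure: a `T_f`-orbit closure which projects onto all
of `X` and all of whose vertical sections are single left cosets of
`H = {g : C·g⁻¹ = C}`. -/
def IsStronglyRegularOC (T : X ≃ₜ X) (f : X → G) (C : Set (X × G)) : Prop :=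
  (∃ p : X × G, C = orbitClosure T f p) ∧ Prod.fst '' C = Set.univ ∧
    ∀ x : X, ∃ gx : G, {g : G | (x, g) ∈ C} = {gx} * stabSet C

/-- A strongly regular cocycle: one whose skew product admits a strongly regular
orbit closure. -/
def IsStronglyRegularCocycle (T : X ≃ₜ X) (f : X → G) : Prop :=
  ∃ C : Set (X × G), IsStronglyRegularOC T f C

/-- A regular cocycle: some `T_f`-orbit closure projects onto all of `X`. -/
def IsRegularCocycle (T : X ≃ₜ X) (f : X → G) : Prop :=
  ∃ p : X × G, Prod.fst '' orbitClosure T f p = Set.univ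

end Defs

/-! `E_x(f)` is the set of cluster points of `(k, y) ↦ f(k, y)` along the filter of pairs with
`y` and `Tᵏy` both close to `x`. Moving `y` to `Tⁿy` maps this filter at `x` into the one at
`Tⁿx`, and by the cocycle identity `f(k, Tⁿy) = f(n, Tᵏy) · f(k, y) · f(n, y)⁻¹`, whose outer
factors both tend to `f(n, x)` by continuity. So `f(n, x) E_x(f) f(n, x)⁻¹ ⊆ E_{Tⁿx}(f)`, and
the reverse inclusion is the same statement for `-n` at `Tⁿx`. -/

namespace Homeomorph

variable {X : Type*} [TopologicalSpace X]

def toPermHom : (X ≃ₜ X) →* Equiv.Perm X where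
  toFun := Homeomorph.toEquiv
  map_one' := rfl
  map_mul' _ _ := rfl

theorem continuous_toEquiv_zpow (T : X ≃ₜ X) (n : ℤ) : Continuous ⇑(T.toEquiv ^ n) := by
  rw [show T.toEquiv ^ n = (T ^ n).toEquiv from (map_zpow toPermHom T n).symm]
  exact (T ^ n).continuous

end Homeomorph

section Cocycle

variable {X : Type*} [TopologicalSpace X] {G : Type*} [Group G] (T : X ≃ₜ X) (f : X → G)

@[simp]
theorem cocycle_zero (x : X) : cocycle T f 0 x = 1 := rfl

theorem cocycle_natCast (m : ℕ) (x : X) : cocycle T f m x = cocycleNat T f m x := by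
  simp [cocycle]

theorem cocycle_neg_natCast (m : ℕ) (x : X) :
    cocycle T f (-m) x = (cocycleNat T f m ((T.toEquiv ^ (-m : ℤ)) x))⁻¹ := by
  rcases Nat.eq_zero_or_pos m with rfl | hm
  · simp [cocycle, cocycleNat]
  · simp [cocycle, hm.ne']

theorem cocycleNat_succ' (m : ℕ) (x : X) :
    cocycleNat T f (m + 1) x = cocycleNat T f m (T x) * f x := by
  induction m generalizing x with
  | zero => simp [cocycleNat]
  | succ m ih =>
    rw [cocycleNat, ih, cocycleNat, mul_assoc, pow_succ, Equiv.Perm.mul_apply]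
    rfl

theorem cocycle_succ (n : ℤ) (x : X) :
    cocycle T f (n + 1) x = f ((T.toEquiv ^ n) x) * cocycle T f n x := by
  obtain ⟨m, rfl | rfl⟩ := Int.eq_nat_or_neg n
  · exact_mod_cast cocycle_natCast T f (m + 1) x
  cases m with
  | zero => simp [cocycle, cocycleNat]
  | succ m =>
    have hT : T ((T.toEquiv ^ (-(m + 1 : ℕ) : ℤ)) x) = (T.toEquiv ^ (-m : ℤ)) x := by
      change (T.toEquiv * T.toEquiv ^ (-((m + 1 : ℕ) : ℤ))) x = _
      rw [mul_self_zpow]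
      congr 2
      push_cast
      ring
    rw [show -((m + 1 : ℕ) : ℤ) + 1 = -m by push_cast; ring, cocycle_neg_natCast,
      cocycle_neg_natCast, cocycleNat_succ', hT, mul_inv_rev, mul_inv_cancel_left]

theorem cocycle_sub_one (n : ℤ) (x : X) :
    cocycle T f (n - 1) x = (f ((T.toEquiv ^ (n - 1)) x))⁻¹ * cocycle T f n x := by
  rw [eq_inv_mul_iff_mul_eq, ← cocycle_succ, sub_add_cancel]

theorem cocycle_add (k n : ℤ) (x : X) :
    cocycle T f (k + n) x = cocycle T f k ((T.toEquiv ^ n) x) * cocycle T f n x := by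
  induction k using Int.induction_on with
  | zero => simp
  | succ k ih =>
    rw [add_right_comm, cocycle_succ, ih, cocycle_succ, ← Equiv.Perm.mul_apply, ← zpow_add,
      mul_assoc]
  | pred k ih =>
    rw [sub_add_eq_add_sub, cocycle_sub_one, ih, cocycle_sub_one, ← Equiv.Perm.mul_apply,
      ← zpow_add, sub_add_eq_add_sub, mul_assoc]

theorem cocycle_zpow_apply (k n : ℤ) (y : X) :
    cocycle T f k ((T.toEquiv ^ n) y) =
      cocycle T f n ((T.toEquiv ^ k) y) * cocycle T f k y * (cocycle T f n y)⁻¹ := by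
  rw [eq_mul_inv_iff_mul_eq, ← cocycle_add, add_comm, cocycle_add]

theorem cocycle_neg_zpow_apply (n : ℤ) (x : X) :
    cocycle T f (-n) ((T.toEquiv ^ n) x) = (cocycle T f n x)⁻¹ :=
  eq_inv_of_mul_eq_one_left (by rw [← cocycle_add, neg_add_cancel, cocycle_zero])

theorem continuous_cocycle [TopologicalSpace G] [IsTopologicalGroup G] (hf : Continuous f)
    (n : ℤ) : Continuous (cocycle T f n) := by
  induction n using Int.induction_on with
  | zero => exact continuous_const
  | succ n ih =>
    simp_rw [funext (cocycle_succ T f n)]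
    exact (hf.comp (T.continuous_toEquiv_zpow n)).mul ih
  | pred n ih =>
    simp_rw [funext (cocycle_sub_one T f (-n))]
    exact (hf.comp (T.continuous_toEquiv_zpow _)).inv.mul ih

end Cocycle

theorem MapClusterPt.mul_mul_inv {α G : Type*} [TopologicalSpace G] [Group G]
    [IsTopologicalGroup G] {F : Filter α} {u v w : α → G} {a b c : G}
    (hu : Tendsto u F (𝓝 a)) (hv : MapClusterPt b F v) (hw : Tendsto w F (𝓝 c)) :
    MapClusterPt (a * b * c⁻¹) F fun i => u i * v i * (w i)⁻¹ := by
  obtain ⟨U, hUF, hvU⟩ := mapClusterPt_iff_ultrafilter.1 hv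
  exact mapClusterPt_iff_ultrafilter.2
    ⟨U, hUF, ((hu.mono_left hUF).mul hvU).mul (hw.mono_left hUF).inv⟩

section ReturnFilter

variable {X : Type*} [TopologicalSpace X] (T : X ≃ₜ X)

def returnFilter (x : X) : Filter (ℤ × X) :=
  comap (fun p => (p.2, (T.toEquiv ^ p.1) p.2)) (𝓝 (x, x))

theorem returnFilter_hasBasis (x : X) :
    (returnFilter T x).HasBasis (fun U : Set X => x ∈ U ∧ IsOpen U)
      fun U => {p | p.2 ∈ U ∧ (T.toEquiv ^ p.1) p.2 ∈ U} := by
  rw [returnFilter, nhds_prod_eq]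
  exact (nhds_basis_opens x).prod_self.comap _

theorem tendsto_snd_returnFilter (x : X) : Tendsto Prod.snd (returnFilter T x) (𝓝 x) :=
  (continuous_fst.tendsto (x, x)).comp tendsto_comap

theorem tendsto_zpow_apply_returnFilter (x : X) :
    Tendsto (fun p : ℤ × X => (T.toEquiv ^ p.1) p.2) (returnFilter T x) (𝓝 x) :=
  (continuous_snd.tendsto (x, x)).comp tendsto_comap

theorem tendsto_map_zpow_returnFilter (x : X) (n : ℤ) :
    Tendsto (fun p : ℤ × X => (p.1, (T.toEquiv ^ n) p.2)) (returnFilter T x)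
      (returnFilter T ((T.toEquiv ^ n) x)) := by
  have hcomm (k : ℤ) (y : X) :
      (T.toEquiv ^ k) ((T.toEquiv ^ n) y) = (T.toEquiv ^ n) ((T.toEquiv ^ k) y) := by
    rw [← Equiv.Perm.mul_apply, zpow_mul_comm, Equiv.Perm.mul_apply]
  have hTn := T.continuous_toEquiv_zpow n
  refine tendsto_comap_iff.2 ?_
  simp_rw [Function.comp_def, hcomm]
  exact ((hTn.prodMap hTn).tendsto (x, x)).comp tendsto_comap

end ReturnFilter

section EssRange

variable {X : Type*} [TopologicalSpace X] {G : Type*} [TopologicalSpace G] [Group G]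
  [IsTopologicalGroup G] (T : X ≃ₜ X) (f : X → G)

theorem mem_essRange_iff_mapClusterPt (x : X) (g : G) :
    g ∈ essRange T f x ↔ MapClusterPt g (returnFilter T x) fun p => cocycle T f p.1 p.2 := by
  have hg : (𝓝 g).HasBasis (fun V : Set G => (1 : G) ∈ V ∧ IsOpen V) ((· * g) '' ·) := by
    rw [← map_mul_right_nhds_one]
    exact (nhds_basis_opens 1).map _
  rw [hg.mapClusterPt_iff_frequently]
  simp only [(returnFilter_hasBasis T x).frequently_iff, mem_image, Prod.exists]
  constructor
  · rintro h V ⟨h1V, hV⟩ U ⟨hxU, hU⟩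
    obtain ⟨n, y, hyU, hTyU, v, hvV, hcoc⟩ := h U hU hxU V hV h1V
    exact ⟨n, y, ⟨hyU, hTyU⟩, v, hvV, hcoc.symm⟩
  · intro h U hU hxU V hV h1V
    obtain ⟨n, y, ⟨hyU, hTyU⟩, v, hvV, hcoc⟩ := h V ⟨h1V, hV⟩ U ⟨hxU, hU⟩
    exact ⟨n, y, hyU, hTyU, v, hvV, hcoc.symm⟩

variable {T f}

theorem conj_mem_essRange_zpow_apply (hf : Continuous f) {x : X} {g : G}
    (hg : g ∈ essRange T f x) (n : ℤ) :
    cocycle T f n x * g * (cocycle T f n x)⁻¹ ∈ essRange T f ((T.toEquiv ^ n) x) := by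
  rw [mem_essRange_iff_mapClusterPt] at hg ⊢
  have hcont := (continuous_cocycle T f hf n).tendsto x
  refine MapClusterPt.of_comp (tendsto_map_zpow_returnFilter T x n) ?_
  simp only [Function.comp_def, cocycle_zpow_apply T f _ n]
  exact hg.mul_mul_inv (hcont.comp (tendsto_zpow_apply_returnFilter T x))
    (hcont.comp (tendsto_snd_returnFilter T x))

end EssRange

theorem statement_16_general
    {X : Type*} [TopologicalSpace X]
    {G : Type*} [TopologicalSpace G] [Group G] [IsTopologicalGroup G]
    (T : X ≃ₜ X) (f : X → G) (hf : Continuous f)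
    (x : X) (n : ℤ) :
    essRange T f ((T.toEquiv ^ n) x) =
      (fun h => cocycle T f n x * h * (cocycle T f n x)⁻¹) '' essRange T f x := by
  refine Subset.antisymm (fun g hg => ?_) (image_subset_iff.2 fun g hg =>
    conj_mem_essRange_zpow_apply hf hg n)
  have hback := conj_mem_essRange_zpow_apply hf hg (-n)
  rw [← Equiv.Perm.mul_apply, ← zpow_add, neg_add_cancel, zpow_zero, Equiv.Perm.one_apply,
    cocycle_neg_zpow_apply, inv_inv] at hback
  exact ⟨_, hback, by group⟩

theorem statement_16
    {X : Type*} [TopologicalSpace X] [CompactSpace X] [TopologicalSpace.MetrizableSpace X]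
    {G : Type*} [TopologicalSpace G] [Group G] [IsTopologicalGroup G]
    [LocallyCompactSpace G] [SecondCountableTopology G] [T2Space G]
    (T : X ≃ₜ X) (hT : IsMinimal T) (f : X → G) (hf : Continuous f)
    (x : X) (n : ℤ) :
    essRange T f ((T.toEquiv ^ n) x) =
      (fun h => cocycle T f n x * h * (cocycle T f n x)⁻¹) '' essRange T f x :=
  statement_16_general T f hf x n
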